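/- arXiv:1411.1837 — 5 statements merged into one kernel-verified Lean document; each statement's English description precedes it below -/
import Mathlib

section
/- Let G be a simple bipartite graph with parts A and B, each of size 5, such that the multiset of vertex degrees of A in G is {5,5,5,4,3} and the multiset of vertex degrees of B in G is {5,5,5,4,3}. Then G is isomorphic to the graph obtained from the complete bipartite graph K_{5,5}, with parts {a1,a2,a3,a4,a5} and {b1,b2,b3,b4,b5}, by deleting the three edges a4b5, a5b4 and a5b5. (In particular, any two bipartite graphs with these part degree sequences are isomorphic; this graph is Cousin 110 of the E9+e family.) -/
open SimpleGraph

/-- Cousin 110 of the `E₉+e` family: the complete bipartite graph `K_{5,5}` with parts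
`{a1,…,a5}` and `{b1,…,b5}` minus the three edges `a4b5`, `a5b4` and `a5b5`
(indices shifted to `Fin 5`, so the deleted edges are `(inl 3, inr 4)`, `(inl 4, inr 3)`
and `(inl 4, inr 4)`). -/
def cousin110 : SimpleGraph (Fin 5 ⊕ Fin 5) :=
  (completeBipartiteGraph (Fin 5) (Fin 5)).deleteEdges
    {s(Sum.inl 3, Sum.inr 4), s(Sum.inl 4, Sum.inr 3), s(Sum.inl 4, Sum.inr 4)}

/-! Sort both parts by degree. A vertex of degree 5 sees the whole opposite part, so the
first three vertices of each part are complete to the other part. Every row and column of the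
remaining `2 × 2` block of the biadjacency matrix then has a prescribed sum (`1` or `0`), and
these sums force the block to be `[[1, 0], [0, 0]]`, which is the block of `cousin110`. -/

open Finset

theorem Equiv.Perm.exists_comp_eq_of_map_univ_eq {ι α : Type*} [Fintype ι] [DecidableEq α]
    {f g : ι → α} (h : univ.val.map f = univ.val.map g) : ∃ σ : Equiv.Perm ι, f ∘ σ = g := by
  have hfiber (a : α) : Fintype.card {i // g i = a} = Fintype.card {i // f i = a} := by
    have := congr_arg (Multiset.count a) h.symm
    simp only [Multiset.count_map] at this
    simpa [Fintype.card_subtype, Finset.card_def, eq_comm] using this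
  exact ⟨Equiv.ofFiberEquiv fun a => Fintype.equivOfCardEq (hfiber a),
    funext <| Equiv.ofFiberEquiv_map _⟩

namespace SimpleGraph

variable {α β : Type*}

theorem eq_of_le_completeBipartiteGraph {G H : SimpleGraph (α ⊕ β)}
    (hG : G ≤ completeBipartiteGraph α β) (hH : H ≤ completeBipartiteGraph α β)
    (h : ∀ a b, G.Adj (.inl a) (.inr b) ↔ H.Adj (.inl a) (.inr b)) : G = H := by
  ext (a | b) (a' | b')
  · exact iff_of_false (fun h => by simpa using hG h) (fun h => by simpa using hH h)
  · exact h a b'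
  · rw [adj_comm, h a' b, adj_comm]
  · exact iff_of_false (fun h => by simpa using hG h) (fun h => by simpa using hH h)

theorem comap_sumCongr_completeBipartiteGraph {α' β' : Type*} (eα : α ≃ α') (eβ : β ≃ β') :
    (completeBipartiteGraph α' β').comap (Equiv.sumCongr eα eβ) = completeBipartiteGraph α β := by
  ext (_ | _) (_ | _) <;> simp

variable [Fintype α] [Fintype β] {G : SimpleGraph (α ⊕ β)} [DecidableRel G.Adj]

theorem degree_inl_eq_card_filter (hG : G ≤ completeBipartiteGraph α β) (a : α) :
    G.degree (.inl a) = #{b | G.Adj (.inl a) (.inr b)} := by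
  have : G.neighborFinset (.inl a) = ({b | G.Adj (.inl a) (.inr b)} : Finset β).map .inr := by
    ext (a' | b)
    · simpa using fun h => by simpa using hG h
    · simp
  rw [← card_neighborFinset_eq_degree, this, card_map]

theorem degree_inr_eq_card_filter (hG : G ≤ completeBipartiteGraph α β) (b : β) :
    G.degree (.inr b) = #{a | G.Adj (.inl a) (.inr b)} := by
  have : G.neighborFinset (.inr b) = ({a | G.Adj (.inl a) (.inr b)} : Finset α).map .inl := by
    ext (a | b')
    · simp [adj_comm]
    · simpa using fun h => by simpa using hG h
  rw [← card_neighborFinset_eq_degree, this, card_map]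

end SimpleGraph

open SimpleGraph

theorem iff_cousin110_adj_of_card_filter {r : Fin 5 → Fin 5 → Prop} [DecidableRel r]
    (hrow : ∀ i, #{j | r i j} = ![5, 5, 5, 4, 3] i)
    (hcol : ∀ j, #{i | r i j} = ![5, 5, 5, 4, 3] j)
    (i j : Fin 5) : r i j ↔ cousin110.Adj (.inl i) (.inr j) := by
  have hfull : ∀ k : Fin 5, k < 3 → ∀ l, r k l ∧ r l k := by
    intro k hk l
    have hk5 : ![5, 5, 5, 4, 3] k = #(univ : Finset (Fin 5)) := by
      fin_cases k <;> simp_all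
    exact ⟨card_filter_eq_iff.1 ((hrow k).trans hk5) l (mem_univ l),
      card_filter_eq_iff.1 ((hcol k).trans hk5) l (mem_univ l)⟩
  have hrow3 := hrow 3
  have hrow4 := hrow 4
  have hcol3 := hcol 3
  have hcol4 := hcol 4
  simp only [card_filter, Fin.sum_univ_five, Fin.isValue, Fin.reduceLT, hfull, ↓reduceIte,
    Nat.reduceAdd, Matrix.cons_val] at hrow3 hrow4 hcol3 hcol4
  have hblock : r 3 3 ∧ ¬ r 3 4 ∧ ¬ r 4 3 ∧ ¬ r 4 4 := by
    split_ifs at hrow3 hrow4 hcol3 hcol4 <;> first | omega | tauto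
  fin_cases i <;> fin_cases j <;> simp [cousin110, hfull, hblock]

theorem eq_cousin110_of_degree {G : SimpleGraph (Fin 5 ⊕ Fin 5)} [DecidableRel G.Adj]
    (hG : G ≤ completeBipartiteGraph (Fin 5) (Fin 5))
    (hA : ∀ i, G.degree (.inl i) = ![5, 5, 5, 4, 3] i)
    (hB : ∀ j, G.degree (.inr j) = ![5, 5, 5, 4, 3] j) : G = cousin110 :=
  eq_of_le_completeBipartiteGraph hG (deleteEdges_le _) <|
    iff_cousin110_adj_of_card_filter (fun i => (degree_inl_eq_card_filter hG i).symm.trans (hA i))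
      (fun j => (degree_inr_eq_card_filter hG j).symm.trans (hB j))

/-- A bipartite graph with parts of size 5 whose two part degree multisets are both
`{5,5,5,4,3}` is isomorphic to Cousin 110 of the `E₉+e` family. -/
theorem bipartite_55543_55543_unique (G : SimpleGraph (Fin 5 ⊕ Fin 5)) [DecidableRel G.Adj]
    (hbip : ∀ x y, G.Adj x y → (x.isLeft ∧ y.isRight) ∨ (x.isRight ∧ y.isLeft))
    (hA : Multiset.map (fun i : Fin 5 => G.degree (Sum.inl i)) Finset.univ.val
      = {5, 5, 5, 4, 3})
    (hB : Multiset.map (fun j : Fin 5 => G.degree (Sum.inr j)) Finset.univ.val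
      = {5, 5, 5, 4, 3}) :
    Nonempty (G ≃g cousin110) := by
  have hsorted : ({5, 5, 5, 4, 3} : Multiset ℕ) = univ.val.map ![5, 5, 5, 4, 3] := by decide
  obtain ⟨σA, hσA⟩ := Equiv.Perm.exists_comp_eq_of_map_univ_eq (hA.trans hsorted)
  obtain ⟨σB, hσB⟩ := Equiv.Perm.exists_comp_eq_of_map_univ_eq (hB.trans hsorted)
  let e := Equiv.sumCongr σA σB
  have hle : G.comap e ≤ completeBipartiteGraph (Fin 5) (Fin 5) :=
    comap_sumCongr_completeBipartiteGraph σA σB ▸ comap_monotone e.toEmbedding hbip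
  have hdeg (v) : (G.comap e).degree v = G.degree (e v) := ((Iso.comap e G).degree_eq v).symm
  have hcomap : G.comap e = cousin110 :=
    eq_cousin110_of_degree hle (fun i => (hdeg _).trans (congrFun hσA i))
      (fun j => (hdeg _).trans (congrFun hσB j))
  exact ⟨hcomap ▸ (Iso.comap e G).symm⟩
end

section
/- Every simple graph on 14 vertices that is bipartite, 3-regular, and contains no cycle of length 4 (equivalently, any two distinct vertices have at most one common neighbor) is isomorphic to the Heawood graph. -/
open SimpleGraph

/-- The Heawood graph on vertex set `ZMod 14`: distinct vertices `i` and `j` are adjacent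
iff `j = i + 1`, or `j = i - 1`, or (`i` is even and `j = i + 5`), or
(`j` is even and `i = j + 5`), all mod 14. -/
def heawood : SimpleGraph (ZMod 14) where
  Adj i j := i ≠ j ∧ (j = i + 1 ∨ j = i - 1 ∨ (Even i ∧ j = i + 5) ∨ (Even j ∧ i = j + 5))
  symm := ⟨by
    rintro i j ⟨hne, h⟩
    refine ⟨hne.symm, ?_⟩
    rcases h with h | h | h | h
    · right; left; rw [h]; ring
    · left; rw [h]; ring
    · right; right; right; exact h
    · right; right; left; exact h⟩
  loopless := ⟨fun i h => h.1 rfl⟩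

instance (i : ZMod 14) : Decidable (Even i) :=
  decidable_of_iff (∃ r : ZMod 14, i = r + r) Iff.rfl

instance : DecidableRel heawood.Adj := fun i j =>
  inferInstanceAs (Decidable
    (i ≠ j ∧ (j = i + 1 ∨ j = i - 1 ∨ (Even i ∧ j = i + 5) ∨ (Even j ∧ i = j + 5))))

/-!
As `G` has no 4-cycle, distinct neighbours of a vertex `v` share no neighbour other than `v`, so
`v` and the vertices at distance two from it are `1 + 3 * 2 = 7` vertices of the colour of `v`.
A regular bipartite graph has colour classes of equal size, here `7`, so any two distinct
vertices of the same colour have a common neighbour: `G` is the incidence graph of the Fano plane.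

Fix a vertex `0` with neighbours `1, 5, 13`. Each further neighbour of `2` (or of `10`) is then
adjacent to exactly one of the neighbours `4, 6` of `5`, which fixes the labels `3, 7` (and
`9, 11`); likewise the labels `12, 8` of the further neighbours of `13` are fixed by `3, 7`, and
the last two edges `8 9`, `11 12` are forced. Every vertex lies within distance two of `0` or `1`,
so this homomorphism from the Heawood graph is onto, and a surjective homomorphism between cubic
graphs with the same number of vertices is an isomorphism.
-/

open Finset

namespace SimpleGraph

variable {V W : Type*} {G : SimpleGraph V}

def FourCycleFree (G : SimpleGraph V) : Prop :=
  ∀ (v : V) (c : G.Walk v v), c.IsCycle → c.length ≠ 4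

section FourCycleFree

variable {a b u v x y : V}

theorem eq_of_two_common_neighbors (hC4 : G.FourCycleFree) (hxy : x ≠ y) (hux : G.Adj u x)
    (huy : G.Adj u y) (hvx : G.Adj v x) (hvy : G.Adj v y) : u = v := by
  by_contra huv
  refine hC4 u (.cons hux (.cons hvx.symm (.cons hvy (.cons huy.symm .nil)))) ?_ rfl
  simp [Walk.cons_isCycle_iff, huv, hxy, hux.ne, huy.ne, hvy.ne, hux.ne.symm, huy.ne.symm,
    hvx.ne.symm, Ne.symm huv]

theorem not_adj_of_common_neighbor (hC4 : G.FourCycleFree) (hxy : x ≠ y) (hxb : G.Adj x b)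
    (hby : G.Adj b y) (hxa : G.Adj x a) (hab : a ≠ b) : ¬G.Adj a y :=
  fun hay ↦ hxy (eq_of_two_common_neighbors hC4 hab hxa hxb hay.symm hby.symm)

end FourCycleFree

theorem Coloring.eq_of_adj_of_adj (C : G.Coloring (Fin 2)) {x y z : V} (hxy : G.Adj x y)
    (hyz : G.Adj y z) : C x = C z := by
  have := C.valid hxy
  have := C.valid hyz
  omega

theorem eq_or_exists_adj_adj_of_adj {C : G.Coloring (Fin 2)}
    (hcommon : ∀ u z, u ≠ z → C u = C z → ∃ w, G.Adj u w ∧ G.Adj w z) {u v : V}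
    (huv : G.Adj u v) (z : V) :
    z = u ∨ z = v ∨ (∃ w, G.Adj u w ∧ G.Adj w z) ∨ ∃ w, G.Adj v w ∧ G.Adj w z := by
  obtain rfl | hzu := eq_or_ne z u
  · exact .inl rfl
  obtain rfl | hzv := eq_or_ne z v
  · exact .inr (.inl rfl)
  by_cases hC : C u = C z
  · exact .inr (.inr (.inl (hcommon u z hzu.symm hC)))
  · have := C.valid huv
    exact .inr (.inr (.inr (hcommon v z hzv.symm (by omega))))

variable [Fintype V] [DecidableRel G.Adj]

theorem IsRegularOfDegree.two_mul_card_filter_coloring_eq {d : ℕ} (hreg : G.IsRegularOfDegree d)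
    (hd : 0 < d) (C : G.Coloring (Fin 2)) (i : Fin 2) :
    2 * #{v | C v = i} = Fintype.card V := by
  have hbip : G.IsBipartiteWith ↑({v | C v = 0} : Finset V) ↑({v | C v = 1} : Finset V) := by
    refine ⟨?_, fun v w hvw ↦ ?_⟩
    · simp +contextual [Set.disjoint_left]
    · have := C.valid hvw
      simp only [coe_filter, mem_univ, true_and, Set.mem_ofPred_eq]
      omega
  have hsum := isBipartiteWith_sum_degrees_eq hbip
  simp only [hreg.degree_eq, sum_const, smul_eq_mul] at hsum
  have hcard := card_filter_add_card_filter_not (s := univ) (fun v ↦ C v = 0)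
  have hne : ∀ v, ¬C v = 0 ↔ C v = 1 := by omega
  simp only [hne, card_univ] at hcard
  have := Nat.eq_of_mul_eq_mul_right hd hsum
  obtain rfl | rfl : i = 0 ∨ i = 1 := by omega
  all_goals omega

theorem card_insert_biUnion_neighborFinset_erase [DecidableEq V] {d : ℕ}
    (hreg : G.IsRegularOfDegree d) (hC4 : G.FourCycleFree) (v : V) :
    #(insert v ((G.neighborFinset v).biUnion fun w ↦ (G.neighborFinset w).erase v)) =
      d * (d - 1) + 1 := by
  rw [card_insert_of_notMem (by simp), card_biUnion]
  · rw [sum_congr rfl fun w hw ↦ card_erase_of_mem (by simpa [adj_comm] using hw)]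
    simp [hreg.degree_eq]
  · intro w hw w' hw' hww'
    simp only [mem_coe, mem_neighborFinset] at hw hw'
    refine Finset.disjoint_left.2 fun z hz hz' ↦ hww' ?_
    simp only [mem_erase, mem_neighborFinset] at hz hz'
    exact eq_of_two_common_neighbors hC4 hz.1.symm hw.symm hz.2 hw'.symm hz'.2

theorem exists_adj_adj_of_coloring_eq [DecidableEq V] {d : ℕ} (hd : 0 < d)
    (hreg : G.IsRegularOfDegree d) (hC4 : G.FourCycleFree)
    (hcard : Fintype.card V = 2 * (d * (d - 1) + 1)) (C : G.Coloring (Fin 2)) {u z : V}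
    (huz : u ≠ z) (hC : C u = C z) : ∃ w, G.Adj u w ∧ G.Adj w z := by
  set B := insert u ((G.neighborFinset u).biUnion fun w ↦ (G.neighborFinset w).erase u)
  have hB : B ⊆ ({x | C x = C u} : Finset V) := by
    intro x hx
    simp only [B, mem_insert, mem_biUnion, mem_erase, mem_neighborFinset] at hx
    rcases hx with rfl | ⟨w, huw, -, hwx⟩
    · simp
    · simpa using C.eq_of_adj_of_adj hwx.symm huw.symm
  have hBeq : B = ({x | C x = C u} : Finset V) := eq_of_subset_of_card_le hB (by
    have := hreg.two_mul_card_filter_coloring_eq hd C (C u)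
    rw [card_insert_biUnion_neighborFinset_erase hreg hC4]
    omega)
  have hz : z ∈ B := hBeq ▸ by simp [hC]
  simp only [B, mem_insert, mem_biUnion, mem_erase, mem_neighborFinset] at hz
  obtain ⟨w, huw, -, hwz⟩ := hz.resolve_left huz.symm
  exact ⟨w, huw, hwz⟩

theorem nonempty_iso_of_surjective [Fintype W] {H : SimpleGraph W} [DecidableRel H.Adj] {d : ℕ}
    (hH : H.IsRegularOfDegree d) (hG : G.IsRegularOfDegree d)
    (hcard : Fintype.card W = Fintype.card V) (f : H →g G) (hf : Function.Surjective f) :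
    Nonempty (H ≃g G) := by
  classical
  have hbij : Function.Bijective f := (Fintype.bijective_iff_surjective_and_card f).2 ⟨hf, hcard⟩
  refine ⟨{ Equiv.ofBijective f hbij with map_rel_iff' := fun {a b} ↦ ⟨fun hab ↦ ?_, f.map_adj⟩ }⟩
  have himage : (H.neighborFinset a).image f = G.neighborFinset (f a) := by
    refine eq_of_subset_of_card_le (fun y hy ↦ ?_) ?_
    · obtain ⟨c, hc, rfl⟩ := mem_image.1 hy
      simpa using f.map_adj ((mem_neighborFinset ..).1 hc)
    · rw [card_image_of_injective _ hbij.1]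
      simp [hH.degree_eq, hG.degree_eq]
  obtain ⟨c, hc, hcb⟩ := mem_image.1 (himage ▸ (mem_neighborFinset ..).2 hab)
  simpa [← hbij.1 hcb] using hc

section Cubic

variable [DecidableEq V] {a b c t x y : V}

theorem ne_of_neighborFinset_eq (hreg : G.IsRegularOfDegree 3)
    (h : G.neighborFinset x = {a, b, c}) : a ≠ b ∧ a ≠ c ∧ b ≠ c := by
  have h3 : #({a, b, c} : Finset V) = 3 := h ▸ (card_neighborFinset_eq_degree G x).trans (hreg x)
  refine ⟨?_, ?_, ?_⟩ <;> rintro rfl <;>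
    simp only [insert_eq_of_mem, mem_insert, mem_singleton, true_or, or_true] at h3 <;>
    exact absurd h3 (card_le_two.trans_lt (by norm_num)).ne

theorem exists_neighborFinset_eq_insert (hreg : G.IsRegularOfDegree 3) (hxy : G.Adj x y) :
    ∃ z w, G.neighborFinset x = {y, z, w} := by
  obtain ⟨p, q, r, -, -, -, hN⟩ :=
    card_eq_three.1 ((card_neighborFinset_eq_degree G x).trans (hreg x))
  have hy : y ∈ ({p, q, r} : Finset V) := hN ▸ (mem_neighborFinset G x y).2 hxy
  simp only [mem_insert, mem_singleton] at hy
  rcases hy with rfl | rfl | rfl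
  · exact ⟨q, r, hN⟩
  · exact ⟨p, r, hN.trans (insert_comm ..)⟩
  · exact ⟨p, q, hN.trans (by rw [pair_comm q y, insert_comm p y])⟩

theorem adj_of_neighborFinset_eq (h : G.neighborFinset x = {a, b, c}) :
    G.Adj x a ∧ G.Adj x b ∧ G.Adj x c := by
  simp [← mem_neighborFinset, h]

theorem adj_of_neighborFinset_eq_of_not_adj (h : G.neighborFinset x = {a, b, c})
    (hxt : ∃ w, G.Adj x w ∧ G.Adj w t) (ha : ¬G.Adj a t) (hb : ¬G.Adj b t) : G.Adj c t := by
  obtain ⟨w, hxw, hwt⟩ := hxt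
  have hw : w ∈ ({a, b, c} : Finset V) := h ▸ (mem_neighborFinset G x w).2 hxw
  simp only [mem_insert, mem_singleton] at hw
  rcases hw with rfl | rfl | rfl <;> tauto

theorem exists_neighborFinset_eq_and_adj (h : G.neighborFinset x = {a, b, c})
    (hxt : ∃ w, G.Adj x w ∧ G.Adj w t) (ha : ¬G.Adj a t) :
    ∃ b' c', G.neighborFinset x = {a, b', c'} ∧ G.Adj b' t := by
  by_cases hb : G.Adj b t
  · exact ⟨b, c, h, hb⟩
  · exact ⟨c, b, h.trans (by rw [pair_comm]), adj_of_neighborFinset_eq_of_not_adj h hxt ha hb⟩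

theorem exists_neighborFinset_eq_matching (hreg : G.IsRegularOfDegree 3) (hC4 : G.FourCycleFree)
    {C : G.Coloring (Fin 2)}
    (hcommon : ∀ u z, u ≠ z → C u = C z → ∃ w, G.Adj u w ∧ G.Adj w z) {r a b x p q : V}
    (hra : G.Adj r a) (hrb : G.Adj r b) (hab : a ≠ b) (hax : G.Adj a x) (hxr : x ≠ r)
    (hb : G.neighborFinset b = {r, p, q}) :
    ∃ s t, G.neighborFinset x = {a, s, t} ∧ G.Adj s p ∧ G.Adj t q := by
  obtain ⟨-, hbp, hbq⟩ := adj_of_neighborFinset_eq hb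
  obtain ⟨hrp, hrq, hpq⟩ := ne_of_neighborFinset_eq hreg hb
  have hap : ¬G.Adj a p := not_adj_of_common_neighbor hC4 hrp hrb hbp hra hab
  have haq : ¬G.Adj a q := not_adj_of_common_neighbor hC4 hrq hrb hbq hra hab
  have hbx : ¬G.Adj b x := not_adj_of_common_neighbor hC4 hxr.symm hra hax hrb hab.symm
  have hCx : C x = C r := C.eq_of_adj_of_adj hax.symm hra.symm
  have hxp : ∃ w, G.Adj x w ∧ G.Adj w p := hcommon x p (fun h ↦ hap (h ▸ hax))
    (hCx.trans (C.eq_of_adj_of_adj hrb hbp))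
  have hxq : ∃ w, G.Adj x w ∧ G.Adj w q := hcommon x q (fun h ↦ haq (h ▸ hax))
    (hCx.trans (C.eq_of_adj_of_adj hrb hbq))
  obtain ⟨z, w, hx⟩ := exists_neighborFinset_eq_insert hreg hax.symm
  obtain ⟨s, t, hx', hsp⟩ := exists_neighborFinset_eq_and_adj hx hxp hap
  refine ⟨s, t, hx', hsp, adj_of_neighborFinset_eq_of_not_adj hx' hxq haq fun hsq ↦ hbx ?_⟩
  rw [eq_of_two_common_neighbors hC4 hpq hbp hbq hsp hsq]
  exact (adj_of_neighborFinset_eq hx').2.1.symm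

end Cubic

end SimpleGraph

theorem heawood_isRegularOfDegree : heawood.IsRegularOfDegree 3 := by
  intro i
  rw [← card_neighborFinset_eq_degree]
  revert i
  decide

section Labelling

variable {V : Type*} {G : SimpleGraph V}

def heawoodHomOfAdj (f : ZMod 14 → V) (h1 : ∀ i, G.Adj (f i) (f (i + 1)))
    (h5 : ∀ i, Even i → G.Adj (f i) (f (i + 5))) : heawood →g G where
  toFun := f
  map_rel' := by
    rintro i j ⟨-, rfl | rfl | ⟨hi, rfl⟩ | ⟨hj, rfl⟩⟩
    · exact h1 i
    · simpa using (h1 (i - 1)).symm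
    · exact h5 i hi
    · exact (h5 j hj).symm

variable [Fintype V] [DecidableRel G.Adj] [DecidableEq V]

theorem adj_and_adj_of_heawood_configuration (hreg : G.IsRegularOfDegree 3) (hC4 : G.FourCycleFree)
    {C : G.Coloring (Fin 2)}
    (hcommon : ∀ u z, u ≠ z → C u = C z → ∃ w, G.Adj u w ∧ G.Adj w z)
    {v₀ v₁ v₂ v₃ v₄ v₅ v₆ v₇ v₈ v₉ v₁₀ v₁₁ v₁₂ v₁₃ : V}
    (hN0 : G.neighborFinset v₀ = {v₁, v₅, v₁₃}) (hN1 : G.neighborFinset v₁ = {v₀, v₂, v₁₀})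
    (hN2 : G.neighborFinset v₂ = {v₁, v₃, v₇}) (hN5 : G.neighborFinset v₅ = {v₀, v₄, v₆})
    (hN10 : G.neighborFinset v₁₀ = {v₁, v₉, v₁₁}) (hN13 : G.neighborFinset v₁₃ = {v₀, v₁₂, v₈})
    (h34 : G.Adj v₃ v₄) (h76 : G.Adj v₇ v₆) (h94 : G.Adj v₉ v₄) (h11_6 : G.Adj v₁₁ v₆)
    (h12_3 : G.Adj v₁₂ v₃) (h87 : G.Adj v₈ v₇) :
    G.Adj v₈ v₉ ∧ G.Adj v₁₂ v₁₁ := by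
  obtain ⟨h01, h05, h0_13⟩ := adj_of_neighborFinset_eq hN0
  obtain ⟨-, -, h5_13⟩ := ne_of_neighborFinset_eq hreg hN0
  obtain ⟨-, h12, h1_10⟩ := adj_of_neighborFinset_eq hN1
  obtain ⟨-, h0_10, h2_10⟩ := ne_of_neighborFinset_eq hreg hN1
  obtain ⟨-, h23, h27⟩ := adj_of_neighborFinset_eq hN2
  obtain ⟨-, h54, h56⟩ := adj_of_neighborFinset_eq hN5
  obtain ⟨h04, h06, -⟩ := ne_of_neighborFinset_eq hreg hN5
  obtain ⟨-, h10_9, h10_11⟩ := adj_of_neighborFinset_eq hN10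
  obtain ⟨h19, h1_11, -⟩ := ne_of_neighborFinset_eq hreg hN10
  obtain ⟨-, h13_12, h13_8⟩ := adj_of_neighborFinset_eq hN13
  have h0_9 : ¬G.Adj v₀ v₉ := not_adj_of_common_neighbor hC4 h19 h1_10 h10_9 h01.symm h0_10
  have h0_11 : ¬G.Adj v₀ v₁₁ := not_adj_of_common_neighbor hC4 h1_11 h1_10 h10_11 h01.symm h0_10
  have h9_2 : ¬G.Adj v₉ v₂ :=
    not_adj_of_common_neighbor hC4 h2_10.symm h1_10.symm h12 h10_9 h19.symm
  have h11_2 : ¬G.Adj v₁₁ v₂ :=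
    not_adj_of_common_neighbor hC4 h2_10.symm h1_10.symm h12 h10_11 h1_11.symm
  have h4_13 : ¬G.Adj v₄ v₁₃ := not_adj_of_common_neighbor hC4 h5_13 h05.symm h0_13 h54 h04.symm
  have h6_13 : ¬G.Adj v₆ v₁₃ := not_adj_of_common_neighbor hC4 h5_13 h05.symm h0_13 h56 h06.symm
  have hC13 : C v₁₃ = C v₁ := C.eq_of_adj_of_adj h0_13.symm h01
  -- `v₁₃` and `v₉` share a neighbour, neither `v₀` (4-cycle `v₀ v₁ v₁₀ v₉`) nor `v₁₂`
  -- (4-cycle `v₁₂ v₃ v₄ v₉`); symmetrically for `v₁₁`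
  constructor
  · refine adj_of_neighborFinset_eq_of_not_adj hN13
      (hcommon _ _ (fun h ↦ h0_9 (h ▸ h0_13)) (hC13.trans (C.eq_of_adj_of_adj h1_10 h10_9))) h0_9
      (not_adj_of_common_neighbor hC4 (fun h ↦ h9_2 (h ▸ h23.symm)) h34 h94.symm h12_3.symm
        fun h ↦ h4_13 (h ▸ h13_12.symm))
  · refine adj_of_neighborFinset_eq_of_not_adj (hN13.trans (by rw [pair_comm]))
      (hcommon _ _ (fun h ↦ h0_11 (h ▸ h0_13)) (hC13.trans (C.eq_of_adj_of_adj h1_10 h10_11)))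
      h0_11 (not_adj_of_common_neighbor hC4 (fun h ↦ h11_2 (h ▸ h27.symm)) h76 h11_6.symm
        h87.symm fun h ↦ h6_13 (h ▸ h13_8.symm))

theorem exists_heawoodHom (hreg : G.IsRegularOfDegree 3) (hC4 : G.FourCycleFree)
    {C : G.Coloring (Fin 2)}
    (hcommon : ∀ u z, u ≠ z → C u = C z → ∃ w, G.Adj u w ∧ G.Adj w z) (v₀ : V) :
    ∃ f : heawood →g G,
      G.neighborFinset (f 0) = {f 1, f 5, f 13} ∧ G.neighborFinset (f 1) = {f 0, f 2, f 10} ∧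
      G.neighborFinset (f 2) = {f 1, f 3, f 7} ∧ G.neighborFinset (f 5) = {f 0, f 4, f 6} ∧
      G.neighborFinset (f 10) = {f 1, f 9, f 11} ∧ G.neighborFinset (f 13) = {f 0, f 12, f 8} := by
  obtain ⟨v₁, v₅, v₁₃, h1_5, h1_13, -, hN0⟩ :=
    card_eq_three.1 ((card_neighborFinset_eq_degree G v₀).trans (hreg v₀))
  obtain ⟨h01, h05, h0_13⟩ := adj_of_neighborFinset_eq hN0
  obtain ⟨v₂, v₁₀, hN1⟩ := exists_neighborFinset_eq_insert hreg h01.symm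
  obtain ⟨-, h12, h1_10⟩ := adj_of_neighborFinset_eq hN1
  obtain ⟨h02, h0_10, -⟩ := ne_of_neighborFinset_eq hreg hN1
  obtain ⟨v₄, v₆, hN5⟩ := exists_neighborFinset_eq_insert hreg h05.symm
  obtain ⟨v₃, v₇, hN2, h34, h76⟩ :=
    exists_neighborFinset_eq_matching hreg hC4 hcommon h01 h05 h1_5 h12 h02.symm hN5
  obtain ⟨v₉, v₁₁, hN10, h94, h11_6⟩ :=
    exists_neighborFinset_eq_matching hreg hC4 hcommon h01 h05 h1_5 h1_10 h0_10.symm hN5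
  obtain ⟨v₁₂, v₈, hN13, h12_3, h87⟩ :=
    exists_neighborFinset_eq_matching hreg hC4 hcommon h01.symm h12 h02 h0_13 h1_13.symm hN2
  obtain ⟨h89, h12_11⟩ := adj_and_adj_of_heawood_configuration hreg hC4 hcommon hN0 hN1 hN2 hN5
    hN10 hN13 h34 h76 h94 h11_6 h12_3 h87
  obtain ⟨-, h23, h27⟩ := adj_of_neighborFinset_eq hN2
  obtain ⟨-, h54, h56⟩ := adj_of_neighborFinset_eq hN5
  obtain ⟨-, h10_9, h10_11⟩ := adj_of_neighborFinset_eq hN10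
  obtain ⟨-, h13_12, h13_8⟩ := adj_of_neighborFinset_eq hN13
  let f : ZMod 14 → V := ![v₀, v₁, v₂, v₃, v₄, v₅, v₆, v₇, v₈, v₉, v₁₀, v₁₁, v₁₂, v₁₃]
  refine ⟨heawoodHomOfAdj f (fun i ↦ ?_) (fun i hi ↦ ?_), hN0, hN1, hN2, hN5, hN10, hN13⟩
  · fin_cases i
    exacts [h01, h12, h23, h34, h54.symm, h56, h76.symm, h87.symm, h89, h10_9.symm, h10_11,
      h12_11.symm, h13_12.symm, h0_13.symm]
  · obtain rfl | rfl | rfl | rfl | rfl | rfl | rfl :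
        i = 0 ∨ i = 2 ∨ i = 4 ∨ i = 6 ∨ i = 8 ∨ i = 10 ∨ i = 12 := by
      revert i; decide
    exacts [h05, h27, h94.symm, h11_6.symm, h13_8.symm, h1_10.symm, h12_3]

theorem surjective_of_neighborFinset_eq {C : G.Coloring (Fin 2)}
    (hcommon : ∀ u z, u ≠ z → C u = C z → ∃ w, G.Adj u w ∧ G.Adj w z) (f : ZMod 14 → V)
    (h0 : G.neighborFinset (f 0) = {f 1, f 5, f 13})
    (h1 : G.neighborFinset (f 1) = {f 0, f 2, f 10}) (h2 : G.neighborFinset (f 2) = {f 1, f 3, f 7})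
    (h5 : G.neighborFinset (f 5) = {f 0, f 4, f 6})
    (h10 : G.neighborFinset (f 10) = {f 1, f 9, f 11})
    (h13 : G.neighborFinset (f 13) = {f 0, f 12, f 8}) :
    Function.Surjective f := by
  intro z
  have hz := eq_or_exists_adj_adj_of_adj hcommon (adj_of_neighborFinset_eq h0).1 z
  simp only [← mem_neighborFinset, h0, h1, h2, h5, h10, h13, mem_insert, mem_singleton,
    exists_eq_or_imp, exists_eq_left] at hz
  rcases hz with rfl | rfl | hz | hz <;> aesop

end Labelling

/-- Every 14-vertex bipartite 3-regular simple graph with no 4-cycle is isomorphic to the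
Heawood graph. -/
theorem heawood_unique (V : Type*) [Fintype V] (G : SimpleGraph V) [DecidableRel G.Adj]
    (hcard : Fintype.card V = 14)
    (hbip : G.Colorable 2)
    (hreg : G.IsRegularOfDegree 3)
    (hC4 : ∀ (v : V) (c : G.Walk v v), c.IsCycle → c.length ≠ 4) :
    Nonempty (G ≃g heawood) := by
  classical
  obtain ⟨C⟩ := hbip
  have hcommon : ∀ u z, u ≠ z → C u = C z → ∃ w, G.Adj u w ∧ G.Adj w z :=
    fun u z ↦ exists_adj_adj_of_coloring_eq (by norm_num) hreg hC4 (by omega) C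
  obtain ⟨v₀⟩ : Nonempty V := Fintype.card_pos_iff.1 (by omega)
  obtain ⟨f, h0, h1, h2, h5, h10, h13⟩ := exists_heawoodHom hreg hC4 hcommon v₀
  obtain ⟨e⟩ := nonempty_iso_of_surjective heawood_isRegularOfDegree hreg (by simp [hcard]) f
    (surjective_of_neighborFinset_eq hcommon f h0 h1 h2 h5 h10 h13)
  exact ⟨e.symm⟩
end

section
/- In the Heawood graph, for any two distinct vertices u and v of ZMod 14: if u and v have the same parity (lie in the same part of the bipartition) then the distance between u and v is exactly 2, and if u and v have opposite parity (lie in opposite parts) then the distance between u and v is either 1 or 3. In particular the Heawood graph has diameter 3. -/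
open SimpleGraph

/-
The Heawood graph is bipartite with the parity as 2-colouring, so the distance between two
vertices is even exactly when they lie in the same part. Two distinct vertices of the same part
always have a common neighbour (a finite check), so they are at distance at most 2; stepping on
to the neighbour `v + 1` gives distance at most 3 across the parts. Parity then leaves 2 as the
only distance within a part and 1 or 3 across, and 3 is attained by the non-adjacent pair 0, 3.
-/

namespace SimpleGraph

variable {V : Type*} {G : SimpleGraph V}

lemma Coloring.even_dist_iff_congr (c : G.Coloring Bool) {u v : V} (h : G.Reachable u v) :
    Even (G.dist u v) ↔ (c u ↔ c v) := by
  obtain ⟨p, hp⟩ := h.exists_walk_length_eq_dist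
  exact hp ▸ c.even_length_iff_congr p

lemma Connected.diam_eq_of_forall_dist_le (hG : G.Connected) {k : ℕ}
    (hle : ∀ u v, G.dist u v ≤ k) {u v : V} (huv : G.dist u v = k) : G.diam = k := by
  have hediam : G.ediam ≤ k := ediam_le_of_edist_le fun a b => by
    rw [← (hG a b).coe_dist_eq_edist]
    exact_mod_cast hle a b
  have hne : G.ediam ≠ ⊤ := ne_top_of_le_ne_top (ENat.natCast_ne_top k) hediam
  refine le_antisymm ?_ (huv ▸ dist_le_diam hne)
  simpa [diam] using ENat.toNat_le_toNat hediam (ENat.natCast_ne_top k)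

end SimpleGraph

lemma heawood_adj_add_one (v : ZMod 14) : heawood.Adj v (v + 1) := by
  revert v; decide

def heawoodColoring : heawood.Coloring Bool :=
  Coloring.mk (fun v => decide (Even v)) (by intro u v; revert u v; decide)

lemma heawood_exists_common_neighbor :
    ∀ u v : ZMod 14, u ≠ v → (Even u ↔ Even v) → ∃ w, heawood.Adj u w ∧ heawood.Adj w v := by
  decide

lemma heawood_exists_walk_length_le_two {u v : ZMod 14} (h : Even u ↔ Even v) :
    ∃ p : heawood.Walk u v, p.length ≤ 2 := by
  obtain rfl | huv := eq_or_ne u v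
  · exact ⟨.nil, by simp⟩
  obtain ⟨w, huw, hwv⟩ := heawood_exists_common_neighbor u v huv h
  exact ⟨.cons huw (.cons hwv .nil), by simp⟩

lemma heawood_exists_walk_length_le_three (u v : ZMod 14) :
    ∃ p : heawood.Walk u v, p.length ≤ 3 := by
  by_cases h : Even u ↔ Even v
  · obtain ⟨p, hp⟩ := heawood_exists_walk_length_le_two h
    exact ⟨p, by omega⟩
  · have hparity : Even u ↔ Even (v + 1) := by revert u v; decide
    obtain ⟨p, hp⟩ := heawood_exists_walk_length_le_two hparity
    exact ⟨p.concat (heawood_adj_add_one v).symm, by simp only [Walk.length_concat]; omega⟩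

lemma heawood_connected : heawood.Connected :=
  Connected.mk fun u v => (heawood_exists_walk_length_le_three u v).elim fun p _ => ⟨p⟩

lemma heawood_dist_le_three (u v : ZMod 14) : heawood.dist u v ≤ 3 :=
  (heawood_exists_walk_length_le_three u v).elim fun p hp => (dist_le p).trans hp

lemma heawood_even_dist_iff (u v : ZMod 14) : Even (heawood.dist u v) ↔ (Even u ↔ Even v) := by
  have hcolor (w : ZMod 14) : heawoodColoring w = decide (Even w) := rfl
  simpa [hcolor] using heawoodColoring.even_dist_iff_congr (heawood_connected u v)

lemma heawood_dist_zero_three : heawood.dist 0 3 = 3 := by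
  obtain ⟨k, hk⟩ := Nat.not_even_iff_odd.mp ((heawood_even_dist_iff 0 3).not.mpr (by decide))
  have hne_one : heawood.dist 0 3 ≠ 1 := fun h => absurd (dist_eq_one_iff_adj.mp h) (by decide)
  have := heawood_dist_le_three 0 3
  omega

/-- In the Heawood graph, two distinct vertices of the same parity are at distance exactly 2,
and two vertices of opposite parity are at distance 1 or 3; in particular the Heawood graph
has diameter 3. -/
theorem heawood_dist_and_diam :
    (∀ u v : ZMod 14, u ≠ v →
      ((Even u ↔ Even v) → heawood.dist u v = 2) ∧
      (¬ (Even u ↔ Even v) → heawood.dist u v = 1 ∨ heawood.dist u v = 3)) ∧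
    heawood.diam = 3 := by
  refine ⟨fun u v huv => ?_,
    heawood_connected.diam_eq_of_forall_dist_le heawood_dist_le_three heawood_dist_zero_three⟩
  have hpos := heawood_connected.pos_dist_of_ne huv
  have hle := heawood_dist_le_three u v
  constructor
  · intro hparity
    obtain ⟨k, hk⟩ := (heawood_even_dist_iff u v).mpr hparity
    omega
  · intro hparity
    obtain ⟨k, hk⟩ := Nat.not_even_iff_odd.mp ((heawood_even_dist_iff u v).not.mpr hparity)
    omega
end

section
/- Let u, v be vertices of the Heawood graph at distance exactly 3, and let u', v' be another pair of vertices of the Heawood graph at distance exactly 3. Then the graph obtained from the Heawood graph by adding the edge uv is isomorphic to the graph obtained from the Heawood graph by adding the edge u'v'. (This common graph is Cousin 89 of the E9+e family.) -/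
open SimpleGraph

namespace SimpleGraph

variable {V W : Type*} {G : SimpleGraph V} {G' : SimpleGraph W}

theorem Hom.edist_le (f : G →g G') (u v : V) : G'.edist (f u) (f v) ≤ G.edist u v := by
  by_cases h : G.Reachable u v
  · obtain ⟨p, hp⟩ := h.exists_walk_length_eq_edist
    rw [← hp, ← p.length_map f]
    exact SimpleGraph.edist_le _
  · simp [edist_eq_top_of_not_reachable h]

theorem Iso.edist_eq (e : G ≃g G') (u v : V) : G'.edist (e u) (e v) = G.edist u v :=
  le_antisymm (Hom.edist_le e.toHom u v) <| by
    simpa using Hom.edist_le e.symm.toHom (e u) (e v)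

theorem Iso.dist_eq (e : G ≃g G') (u v : V) : G'.dist (e u) (e v) = G.dist u v := by
  simp only [dist, e.edist_eq]

theorem Walk.exists_adj_adj_adj_of_length_eq_three {u v : V} (p : G.Walk u v)
    (hp : p.length = 3) : ∃ a b, G.Adj u a ∧ G.Adj a b ∧ G.Adj b v := by
  rcases p with _ | ⟨h₁, _ | ⟨h₂, _ | ⟨h₃, _ | _⟩⟩⟩ <;> simp at hp
  exact ⟨_, _, h₁, h₂, h₃⟩

theorem exists_adj_adj_adj_of_dist_eq_three {u v : V} (h : G.dist u v = 3) :
    ∃ a b, G.Adj u a ∧ G.Adj a b ∧ G.Adj b v := by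
  obtain ⟨p, hp⟩ := exists_walk_of_dist_ne_zero (h ▸ three_ne_zero)
  exact p.exists_adj_adj_adj_of_length_eq_three (hp.trans h)

theorem not_adj_of_dist_eq_three {u v : V} (h : G.dist u v = 3) : ¬ G.Adj u v := by
  rw [← dist_eq_one_iff_adj, h]
  decide

theorem Iso.nonempty_iso_sup_edge (e : G ≃g G') (u v : V) :
    Nonempty ((G ⊔ fromEdgeSet {s(u, v)}) ≃g (G' ⊔ fromEdgeSet {s(e u, e v)})) :=
  ⟨{ toEquiv := e.toEquiv
     map_rel_iff' := fun {x y} => by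
      change (G' ⊔ fromEdgeSet {s(e u, e v)}).Adj (e x) (e y) ↔ _
      simp only [sup_adj, fromEdgeSet_adj, Set.mem_singleton_iff, Sym2.eq_iff, e.map_adj_iff,
        e.apply_eq_iff_eq, ne_eq] }⟩

end SimpleGraph

theorem heawood_adj_add_iff {c : ZMod 14} (hc : Even c) {x y : ZMod 14} :
    heawood.Adj (x + c) (y + c) ↔ heawood.Adj x y := by
  revert c x y
  decide

theorem heawood_adj_sub_iff {c : ZMod 14} (hc : ¬ Even c) {x y : ZMod 14} :
    heawood.Adj (c - x) (c - y) ↔ heawood.Adj x y := by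
  revert c x y
  decide

def heawoodTranslate (c : ZMod 14) (hc : Even c) : heawood ≃g heawood :=
  ⟨Equiv.addRight c, heawood_adj_add_iff hc⟩

def heawoodReflect (c : ZMod 14) (hc : ¬ Even c) : heawood ≃g heawood :=
  ⟨Equiv.subLeft c, heawood_adj_sub_iff hc⟩

theorem heawood_exists_aut_apply_zero (u : ZMod 14) : ∃ e : heawood ≃g heawood, e 0 = u := by
  by_cases hu : Even u
  · exact ⟨heawoodTranslate u hu, zero_add u⟩
  · exact ⟨heawoodReflect u hu, sub_zero u⟩

def heawoodSwapThreeSeven : heawood ≃g heawood :=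
  ⟨Equiv.swap 3 7 * Equiv.swap 4 6 * Equiv.swap 8 12 * Equiv.swap 9 11, by decide⟩

def heawoodSwapThreeNine : heawood ≃g heawood :=
  ⟨Equiv.swap 2 10 * Equiv.swap 3 9 * Equiv.swap 7 11 * Equiv.swap 8 12, by decide⟩

theorem heawood_eq_of_dist_zero_eq_three {w : ZMod 14} (h : heawood.dist 0 w = 3) :
    w = 3 ∨ w = 7 ∨ w = 9 ∨ w = 11 := by
  have sphere : ∀ w : ZMod 14, ¬ heawood.Adj 0 w →
      (∃ a b, heawood.Adj 0 a ∧ heawood.Adj a b ∧ heawood.Adj b w) →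
      w = 3 ∨ w = 7 ∨ w = 9 ∨ w = 11 := by
    decide
  exact sphere w (not_adj_of_dist_eq_three h) (exists_adj_adj_adj_of_dist_eq_three h)

theorem heawood_exists_aut_fix_zero_apply_three {w : ZMod 14} (h : heawood.dist 0 w = 3) :
    ∃ e : heawood ≃g heawood, e 0 = 0 ∧ e 3 = w := by
  rcases heawood_eq_of_dist_zero_eq_three h with rfl | rfl | rfl | rfl
  · exact ⟨RelIso.refl _, rfl, rfl⟩
  · exact ⟨heawoodSwapThreeSeven, by decide, by decide⟩
  · exact ⟨heawoodSwapThreeNine, by decide, by decide⟩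
  · exact ⟨heawoodSwapThreeSeven.trans heawoodSwapThreeNine, by decide, by decide⟩

theorem heawood_exists_aut_apply_zero_three {u v : ZMod 14} (h : heawood.dist u v = 3) :
    ∃ e : heawood ≃g heawood, e 0 = u ∧ e 3 = v := by
  obtain ⟨e, rfl⟩ := heawood_exists_aut_apply_zero u
  have hw : heawood.dist 0 (e.symm v) = 3 := by
    rw [← e.dist_eq, e.apply_symm_apply, h]
  obtain ⟨σ, hσ0, hσ3⟩ := heawood_exists_aut_fix_zero_apply_three hw
  exact ⟨σ.trans e, by simp [hσ0], by simp [hσ3]⟩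

/-- The graph obtained from the Heawood graph by adding an edge between two vertices at
distance 3 is, up to isomorphism, independent of the chosen pair of vertices
(it is Cousin 89 of the `E₉+e` family). -/
theorem heawood_add_edge_unique (u v u' v' : ZMod 14)
    (h : heawood.dist u v = 3) (h' : heawood.dist u' v' = 3) :
    Nonempty ((heawood ⊔ fromEdgeSet {s(u, v)}) ≃g (heawood ⊔ fromEdgeSet {s(u', v')})) := by
  obtain ⟨e, rfl, rfl⟩ := heawood_exists_aut_apply_zero_three h
  obtain ⟨e', rfl, rfl⟩ := heawood_exists_aut_apply_zero_three h'
  obtain ⟨f⟩ := e.nonempty_iso_sup_edge 0 3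
  obtain ⟨f'⟩ := e'.nonempty_iso_sup_edge 0 3
  exact ⟨f.symm.trans f'⟩
end

section
/- Let G and G' be simple bipartite graphs, each with parts of size 7 whose degree multisets are both {4,3,3,3,3,3,3} on each part, such that in each graph the two degree-4 vertices (one in each part) are adjacent, and every 4-cycle of the graph contains the edge joining its two degree-4 vertices. Then G is isomorphic to G'. (That is, up to isomorphism there is a unique such graph, namely Cousin 89 of the E9+e family, obtained from the Heawood graph by adding an edge between two vertices at distance 3.) -/
open SimpleGraph Finset Function

/-!
Deleting the edge `b b'` leaves a graph without 4-cycles: two vertices other than `b` share at most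
one neighbour, and no two vertices share two neighbours other than `b'` (and symmetrically). Write
`N(b) = {b', t₀, t₁, t₂}`. The sets `N(a) \ {b'}`, for the three neighbours `a ≠ b` of `b'`, are
disjoint pairs, hence partition the six vertices `≠ b'`. So each `tᵢ` has a neighbour `aᵢ` of `b'`,
with `N(aᵢ) = {b', tᵢ, sᵢ}` and `sᵢ ∉ N(b)`, and the third neighbour `uᵢ` of `tᵢ` is forced to have
`N(uᵢ) = {tᵢ} ∪ {sⱼ | j ≠ i}`. Thus every such graph is, in a suitable labelling, the same graph.
-/

theorem Option.elim_injective {α β : Type*} {f : α → β} {b : β} (hf : Injective f)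
    (hb : ∀ a, f a ≠ b) : Injective fun o : Option α => o.elim b f := by
  rintro (_ | a) (_ | a') h
  · rfl
  · exact absurd h.symm (hb a')
  · exact absurd h (hb a)
  · exact congrArg some (hf h)

theorem Finset.exists_mem_ne_ne {α : Type*} [DecidableEq α] {s : Finset α} (hs : 2 < #s)
    (x y : α) : ∃ z ∈ s, z ≠ x ∧ z ≠ y := by
  obtain ⟨z, hz, hxy⟩ := exists_mem_notMem_of_card_lt_card (hs.trans_le' card_le_two)
  exact ⟨z, hz, by simpa [not_or] using hxy⟩

theorem Multiset.apply_mem_of_map_univ_eq_cons {α β : Type*} [Fintype α] [DecidableEq α]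
    {f : α → β} {m : Multiset β} {a x : α} (h : univ.val.map f = f a ::ₘ m) (hx : x ≠ a) :
    f x ∈ m := by
  rw [← Multiset.cons_erase (mem_univ_val a), Multiset.map_cons, Multiset.cons_inj_right] at h
  exact h ▸ Multiset.mem_map_of_mem f ((Multiset.mem_erase_of_ne hx).2 (mem_univ_val x))

theorem eq_three_of_map_univ_eq {α : Type*} [Fintype α] [DecidableEq α] {d : α → ℕ} {a x : α}
    (h : univ.val.map d = {4, 3, 3, 3, 3, 3, 3}) (ha : d a = 4) (hx : x ≠ a) : d x = 3 :=
  Multiset.eq_of_mem_replicate (n := 6)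
    (Multiset.apply_mem_of_map_univ_eq_cons (h.trans (by rw [ha]; rfl)) hx)

section Rectangles

variable {V W : Type*} {r : V → W → Prop} {b x x' : V} {b' y y' : W}

/-- For the biadjacency relation of a bipartite graph, rectangles are 4-cycles. -/
def RectanglesThrough (r : V → W → Prop) (b : V) (b' : W) : Prop :=
  ∀ ⦃x x' y y'⦄, x ≠ x' → y ≠ y' → r x y → r x y' → r x' y → r x' y' →
    (x = b ∨ x' = b) ∧ (y = b' ∨ y' = b')

namespace RectanglesThrough

theorem not_rel_of_ne_left (h : RectanglesThrough r b b') (hx : x ≠ x') (hxb : x ≠ b)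
    (hx'b : x' ≠ b) (hy : y ≠ y') (hxy : r x y) (hxy' : r x y') (hx'y : r x' y) :
    ¬ r x' y' := fun hx'y' =>
  (h hx hy hxy hxy' hx'y hx'y').1.elim hxb hx'b

theorem not_rel_of_ne_right (h : RectanglesThrough r b b') (hy : y ≠ y') (hyb : y ≠ b')
    (hy'b : y' ≠ b') (hx : x ≠ x') (hxy : r x y) (hxy' : r x y') (hx'y : r x' y) :
    ¬ r x' y' := fun hx'y' =>
  (h hx hy hxy hxy' hx'y hx'y').2.elim hyb hy'b

end RectanglesThrough

end Rectangles

section Neighbours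

variable {V W : Type*}

def rightNbrs [Fintype W] (r : V → W → Prop) [DecidableRel r] (x : V) : Finset W := {y | r x y}

def leftNbrs [Fintype V] (r : V → W → Prop) [DecidableRel r] (y : W) : Finset V := {x | r x y}

variable {r : V → W → Prop} [DecidableRel r] {b x : V} {b' y : W}

@[simp] theorem mem_rightNbrs [Fintype W] : y ∈ rightNbrs r x ↔ r x y := by simp [rightNbrs]

@[simp] theorem mem_leftNbrs [Fintype V] : x ∈ leftNbrs r y ↔ r x y := by simp [leftNbrs]

/-- The neighbourhoods of the three vertices `≠ b` adjacent to `b'` are pairwise disjoint off `b'`,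
so by counting they cover everything. -/
theorem RectanglesThrough.exists_rel_of_ne [Fintype V] [Fintype W] [DecidableEq V]
    [DecidableEq W] (h : RectanglesThrough r b b') (hW : Fintype.card W = 7)
    (hrow : ∀ x, x ≠ b → #(rightNbrs r x) = 3) (hcolb : #(leftNbrs r b') = 4) (hbb : r b b')
    (hy : y ≠ b') : ∃ x, x ≠ b ∧ r x b' ∧ r x y := by
  set A := (leftNbrs r b').erase b
  set P : V → Finset W := fun x => (rightNbrs r x).erase b'
  have hA : ∀ x ∈ A, x ≠ b ∧ r x b' := by simp [A]
  have hP : ∀ x ∈ A, #(P x) = 2 := fun x hx => by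
    rw [card_erase_of_mem (mem_rightNbrs.2 (hA x hx).2), hrow x (hA x hx).1]
  have hdisj : (A : Set V).PairwiseDisjoint P := fun x hx x' hx' hne => by
    refine disjoint_left.2 fun z hz hz' => ?_
    simp only [P, mem_erase, mem_rightNbrs] at hz hz'
    exact h.not_rel_of_ne_left hne (hA x hx).1 (hA x' hx').1 (Ne.symm hz.1) (hA x hx).2 hz.2
      (hA x' hx').2 hz'.2
  have hcover : A.biUnion P = univ.erase b' := by
    refine eq_of_subset_of_card_le (fun z hz => ?_) ?_
    · obtain ⟨x, -, hz⟩ := mem_biUnion.1 hz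
      exact mem_erase.2 ⟨(mem_erase.1 hz).1, mem_univ z⟩
    · rw [card_biUnion hdisj, sum_const_nat hP, card_erase_of_mem (mem_univ b'), card_univ, hW,
        card_erase_of_mem (mem_leftNbrs.2 hbb), hcolb]
  obtain ⟨x, hx, hxy⟩ := mem_biUnion.1 (hcover ▸ mem_erase.2 ⟨hy, mem_univ y⟩)
  exact ⟨x, (hA x hx).1, (hA x hx).2, mem_rightNbrs.1 (mem_of_mem_erase hxy)⟩

end Neighbours

/-- The biadjacency relation of Cousin 89. On the left `none, some (inl i), some (inr i)` stand for
`b, aᵢ, uᵢ`, on the right for `b', tᵢ, sᵢ`. -/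
def cousin89Adj : Option (Fin 3 ⊕ Fin 3) → Option (Fin 3 ⊕ Fin 3) → Prop
  | none, none => True
  | none, some (.inl _) => True
  | none, some (.inr _) => False
  | some (.inl _), none => True
  | some (.inl i), some (.inl j) => i = j
  | some (.inl i), some (.inr j) => i = j
  | some (.inr _), none => False
  | some (.inr i), some (.inl j) => i = j
  | some (.inr i), some (.inr j) => i ≠ j

instance : DecidableRel cousin89Adj := fun p q => by
  rcases p with _ | _ | _ <;> rcases q with _ | _ | _ <;> unfold cousin89Adj <;> infer_instance

theorem eq_of_cousin89Adj_iff :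
    ∀ p p', (∀ q, cousin89Adj p q ↔ cousin89Adj p' q) → p = p' := by
  decide

/-- The vertices `aᵢ, uᵢ, tᵢ, sᵢ` of the proof sketch, with only the facts that go into their
construction: all other adjacencies are then forced by `RectanglesThrough`. -/
structure Labelling {V W : Type*} (r : V → W → Prop) (b : V) (b' : W) where
  a : Fin 3 → V
  u : Fin 3 → V
  t : Fin 3 → W
  s : Fin 3 → W
  t_injective : Injective t
  t_ne : ∀ i, t i ≠ b'
  rel_b_t : ∀ i, r b (t i)
  a_ne : ∀ i, a i ≠ b
  rel_a_b' : ∀ i, r (a i) b'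
  rel_a_t : ∀ i, r (a i) (t i)
  s_ne_b' : ∀ i, s i ≠ b'
  s_ne_t : ∀ i, s i ≠ t i
  rel_a_s : ∀ i, r (a i) (s i)
  u_ne_b : ∀ i, u i ≠ b
  u_ne_a : ∀ i, u i ≠ a i
  rel_u_t : ∀ i, r (u i) (t i)

namespace Labelling

variable {V W : Type*} {r : V → W → Prop} {b x : V} {b' y : W} {i j : Fin 3}
  (L : Labelling r b b')

def left (p : Option (Fin 3 ⊕ Fin 3)) : V := p.elim b (Sum.elim L.a L.u)

def right (q : Option (Fin 3 ⊕ Fin 3)) : W := q.elim b' (Sum.elim L.t L.s)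

theorem rel_t_iff (h : RectanglesThrough r b b') (hx : x ≠ b) (hxt : r x (L.t i)) :
    r x (L.t j) ↔ i = j := by
  refine ⟨fun hr => ?_, fun hij => hij ▸ hxt⟩
  by_contra hij
  exact h.not_rel_of_ne_right (L.t_injective.ne hij) (L.t_ne i) (L.t_ne j) hx.symm
    (L.rel_b_t i) (L.rel_b_t j) hxt hr

theorem a_injective (h : RectanglesThrough r b b') : Injective L.a := fun i j hij =>
  (L.rel_t_iff h (L.a_ne i) (L.rel_a_t i)).1 (hij ▸ L.rel_a_t j)

theorem rel_a_s_iff (h : RectanglesThrough r b b') : r (L.a i) (L.s j) ↔ i = j := by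
  refine ⟨fun hr => ?_, fun hij => hij ▸ L.rel_a_s i⟩
  by_contra hij
  exact h.not_rel_of_ne_left (L.a_injective h |>.ne (Ne.symm hij)) (L.a_ne j) (L.a_ne i)
    (L.s_ne_b' j).symm (L.rel_a_b' j) (L.rel_a_s j) (L.rel_a_b' i) hr

theorem s_injective (h : RectanglesThrough r b b') : Injective L.s := fun i _ hij =>
  (L.rel_a_s_iff h).1 (hij ▸ L.rel_a_s i)

theorem not_rel_b_s (h : RectanglesThrough r b b') : ¬ r b (L.s i) :=
  h.not_rel_of_ne_right (L.s_ne_t i).symm (L.t_ne i) (L.s_ne_b' i) (L.a_ne i) (L.rel_a_t i)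
    (L.rel_a_s i) (L.rel_b_t i)

theorem not_rel_u_of_rel_a (h : RectanglesThrough r b b') (hy : L.t i ≠ y) (hay : r (L.a i) y) :
    ¬ r (L.u i) y :=
  h.not_rel_of_ne_left (L.u_ne_a i).symm (L.a_ne i) (L.u_ne_b i) hy (L.rel_a_t i) hay
    (L.rel_u_t i)

theorem right_injective (h : RectanglesThrough r b b') : Injective L.right := by
  refine Option.elim_injective (Injective.sumElim L.t_injective (L.s_injective h) ?_) ?_
  · exact fun i j hij => L.not_rel_b_s h (hij ▸ L.rel_b_t i)
  · rintro (i | i)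
    exacts [L.t_ne i, L.s_ne_b' i]

theorem right_bijective [Fintype W] (h : RectanglesThrough r b b') (hW : Fintype.card W = 7) :
    Bijective L.right :=
  (Fintype.bijective_iff_injective_and_card _).2 ⟨L.right_injective h, hW ▸ rfl⟩

theorem rel_u_s_iff [Fintype W] [DecidableEq W] [DecidableRel r] (h : RectanglesThrough r b b')
    (hW : Fintype.card W = 7) (hu : #(rightNbrs r (L.u i)) = 3) :
    r (L.u i) (L.s j) ↔ i ≠ j := by
  refine ⟨fun hr hij => L.not_rel_u_of_rel_a h (L.s_ne_t i).symm (L.rel_a_s i) (hij ▸ hr),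
    fun hij => ?_⟩
  have hsub : rightNbrs r (L.u i) ⊆ insert (L.t i) ((univ.erase i).image L.s) := by
    intro y hy
    obtain ⟨q, rfl⟩ := (L.right_bijective h hW).2 y
    rw [mem_rightNbrs] at hy
    rcases q with _ | k | k
    · exact absurd hy (L.not_rel_u_of_rel_a h (L.t_ne i) (L.rel_a_b' i))
    · rw [← (L.rel_t_iff h (L.u_ne_b i) (L.rel_u_t i)).1 hy]
      exact mem_insert_self _ _
    · refine mem_insert_of_mem (mem_image_of_mem _ (mem_erase.2 ⟨fun hki => ?_, mem_univ k⟩))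
      exact L.not_rel_u_of_rel_a h (L.s_ne_t i).symm (L.rel_a_s i) (hki ▸ hy)
  have hcard : #(insert (L.t i) ((univ.erase i).image L.s)) ≤ #(rightNbrs r (L.u i)) := by
    rw [hu]
    exact (card_insert_le _ _).trans (Nat.succ_le_succ (card_image_le.trans (by simp)))
  have hs : L.s j ∈ insert (L.t i) ((univ.erase i).image L.s) :=
    mem_insert_of_mem (mem_image_of_mem _ (mem_erase.2 ⟨Ne.symm hij, mem_univ j⟩))
  exact mem_rightNbrs.1 (eq_of_subset_of_card_le hsub hcard ▸ hs)

theorem rel_left_right_iff [Fintype W] [DecidableEq W] [DecidableRel r]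
    (h : RectanglesThrough r b b') (hW : Fintype.card W = 7) (hu : ∀ i, #(rightNbrs r (L.u i)) = 3)
    (hbb : r b b') :
    ∀ p q, r (L.left p) (L.right q) ↔ cousin89Adj p q := by
  rintro (_ | i | i) (_ | j | j) <;> simp only [left, right, cousin89Adj, Option.elim,
    Sum.elim_inl, Sum.elim_inr, iff_true, iff_false]
  exacts [hbb, L.rel_b_t j, L.not_rel_b_s h, L.rel_a_b' i, L.rel_t_iff h (L.a_ne i) (L.rel_a_t i),
    L.rel_a_s_iff h, L.not_rel_u_of_rel_a h (L.t_ne i) (L.rel_a_b' i),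
    L.rel_t_iff h (L.u_ne_b i) (L.rel_u_t i), L.rel_u_s_iff h hW (hu i)]

theorem left_injective (hiff : ∀ p q, r (L.left p) (L.right q) ↔ cousin89Adj p q) :
    Injective L.left :=
  fun p p' hp => eq_of_cousin89Adj_iff p p' fun q => by rw [← hiff, ← hiff, hp]

theorem nonempty [Fintype V] [Fintype W] [DecidableEq V] [DecidableEq W] [DecidableRel r]
    (h : RectanglesThrough r b b') (hW : Fintype.card W = 7)
    (hrow : ∀ x, x ≠ b → #(rightNbrs r x) = 3) (hrowb : #(rightNbrs r b) = 4)
    (hcol : ∀ y, y ≠ b' → #(leftNbrs r y) = 3) (hcolb : #(leftNbrs r b') = 4) (hbb : r b b') :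
    Nonempty (Labelling r b b') := by
  have hT : #((rightNbrs r b).erase b') = 3 := by
    rw [card_erase_of_mem (mem_rightNbrs.2 hbb), hrowb]
  set e := ((rightNbrs r b).erase b').equivFinOfCardEq hT
  have ht : ∀ i, (e.symm i : W) ≠ b' ∧ r b (e.symm i) := fun i =>
    have hi := mem_erase.1 (e.symm i).2
    ⟨hi.1, mem_rightNbrs.1 hi.2⟩
  choose a ha_ne ha_b' ha_t using fun i => h.exists_rel_of_ne hW hrow hcolb hbb (ht i).1
  choose s hs hs_b' hs_t using fun i => exists_mem_ne_ne (hrow (a i) (ha_ne i)).ge b' (e.symm i)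
  choose u hu hu_b hu_a using fun i => exists_mem_ne_ne (hcol _ (ht i).1).ge b (a i)
  exact ⟨{ a, u, s
           t := fun i => e.symm i
           t_injective := Subtype.val_injective.comp e.symm.injective
           t_ne := fun i => (ht i).1
           rel_b_t := fun i => (ht i).2
           a_ne := ha_ne
           rel_a_b' := ha_b'
           rel_a_t := ha_t
           s_ne_b' := hs_b'
           s_ne_t := hs_t
           rel_a_s := fun i => mem_rightNbrs.1 (hs i)
           u_ne_b := hu_b
           u_ne_a := hu_a
           rel_u_t := fun i => mem_leftNbrs.1 (hu i) }⟩

end Labelling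

namespace SimpleGraph

variable {V W : Type*} {G : SimpleGraph (V ⊕ W)} {b : V} {b' : W}

abbrev biadj (G : SimpleGraph (V ⊕ W)) (x : V) (y : W) : Prop := G.Adj (.inl x) (.inr y)

theorem degree_inl_eq_card_rightNbrs [Fintype V] [Fintype W] [DecidableRel G.Adj]
    (hG : ∀ v w, G.Adj v w → v.isLeft ∧ w.isRight ∨ v.isRight ∧ w.isLeft) (x : V) :
    G.degree (.inl x) = #(rightNbrs G.biadj x) := by
  suffices G.neighborFinset (.inl x) = (rightNbrs G.biadj x).map .inr by
    rw [← card_neighborFinset_eq_degree, this, card_map]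
  ext (x' | y)
  · simpa using hG (.inl x) (.inl x')
  · simp

theorem degree_inr_eq_card_leftNbrs [Fintype V] [Fintype W] [DecidableRel G.Adj]
    (hG : ∀ v w, G.Adj v w → v.isLeft ∧ w.isRight ∨ v.isRight ∧ w.isLeft) (y : W) :
    G.degree (.inr y) = #(leftNbrs G.biadj y) := by
  suffices G.neighborFinset (.inr y) = (leftNbrs G.biadj y).map .inl by
    rw [← card_neighborFinset_eq_degree, this, card_map]
  ext (x | y')
  · simp [G.adj_comm]
  · simpa using hG (.inr y) (.inr y')

theorem rectanglesThrough_biadj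
    (h4 : ∀ (v : V ⊕ W) (c : G.Walk v v), c.IsCycle → c.length = 4 →
      s(.inl b, .inr b') ∈ c.edges) :
    RectanglesThrough G.biadj b b' := by
  intro x x' y y' hx hy hxy hxy' hx'y hx'y'
  let c : G.Walk (.inl x) (.inl x) :=
    .cons hxy (.cons hx'y.symm (.cons hx'y' (.cons hxy'.symm .nil)))
  have hc : c.IsCycle := by
    simp [c, Walk.isCycle_def, Walk.isTrail_def, hx, hy, hx.symm]
  have := h4 _ c hc rfl
  simp only [c, Walk.edges_cons, Walk.edges_nil, List.mem_cons, List.not_mem_nil, Sym2.eq,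
    Sym2.rel_iff', Prod.mk.injEq, Prod.swap_prod_mk, Sum.inl.injEq, Sum.inr.injEq, reduceCtorEq,
    and_self, or_false, false_or] at this
  tauto

def isoOfBiadjIff {V' W' : Type*} {G' : SimpleGraph (V' ⊕ W')}
    (hG : ∀ v w, G.Adj v w → v.isLeft ∧ w.isRight ∨ v.isRight ∧ w.isLeft)
    (hG' : ∀ v w, G'.Adj v w → v.isLeft ∧ w.isRight ∨ v.isRight ∧ w.isLeft)
    (e₁ : V ≃ V') (e₂ : W ≃ W') (h : ∀ x y, G'.biadj (e₁ x) (e₂ y) ↔ G.biadj x y) : G ≃g G' where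
  toEquiv := e₁.sumCongr e₂
  map_rel_iff' := by
    rintro (x | y) (x' | y')
    · simpa using iff_of_false (by simpa using hG' (.inl (e₁ x)) (.inl (e₁ x')))
        (by simpa using hG (.inl x) (.inl x'))
    · exact h x y'
    · simpa [G.adj_comm, G'.adj_comm] using h x' y
    · simpa using iff_of_false (by simpa using hG' (.inr (e₂ y)) (.inr (e₂ y')))
        (by simpa using hG (.inr y) (.inr y'))

theorem exists_equiv_biadj_iff_cousin89Adj [Fintype V] [Fintype W] [DecidableRel G.Adj]
    (hG : ∀ v w, G.Adj v w → v.isLeft ∧ w.isRight ∨ v.isRight ∧ w.isLeft)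
    (hA : Multiset.map (fun i : V => G.degree (.inl i)) univ.val = {4, 3, 3, 3, 3, 3, 3})
    (hB : Multiset.map (fun j : W => G.degree (.inr j)) univ.val = {4, 3, 3, 3, 3, 3, 3})
    (hb : G.degree (.inl b) = 4) (hb' : G.degree (.inr b') = 4) (hadj : G.Adj (.inl b) (.inr b'))
    (h4 : ∀ (v : V ⊕ W) (c : G.Walk v v), c.IsCycle → c.length = 4 →
      s(.inl b, .inr b') ∈ c.edges) :
    ∃ (f : Option (Fin 3 ⊕ Fin 3) ≃ V) (g : Option (Fin 3 ⊕ Fin 3) ≃ W),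
      ∀ p q, G.biadj (f p) (g q) ↔ cousin89Adj p q := by
  classical
  have hV : Fintype.card V = 7 := by simpa using congrArg Multiset.card hA
  have hW : Fintype.card W = 7 := by simpa using congrArg Multiset.card hB
  have hrow : ∀ x, x ≠ b → #(rightNbrs G.biadj x) = 3 := fun x hx =>
    degree_inl_eq_card_rightNbrs hG x ▸
      eq_three_of_map_univ_eq (d := fun x => G.degree (.inl x)) hA hb hx
  have hcol : ∀ y, y ≠ b' → #(leftNbrs G.biadj y) = 3 := fun y hy =>
    degree_inr_eq_card_leftNbrs hG y ▸
      eq_three_of_map_univ_eq (d := fun y => G.degree (.inr y)) hB hb' hy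
  have hrect := rectanglesThrough_biadj h4
  obtain ⟨L⟩ := Labelling.nonempty hrect hW hrow (degree_inl_eq_card_rightNbrs hG b ▸ hb) hcol
    (degree_inr_eq_card_leftNbrs hG b' ▸ hb') hadj
  have hiff := L.rel_left_right_iff hrect hW (fun i => hrow _ (L.u_ne_b i)) hadj
  refine ⟨.ofBijective L.left ?_, .ofBijective L.right (L.right_bijective hrect hW), hiff⟩
  exact (Fintype.bijective_iff_injective_and_card _).2 ⟨L.left_injective hiff, hV ▸ rfl⟩

end SimpleGraph

/-- Up to isomorphism there is a unique bipartite graph with parts of size 7, both of degree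
multiset `{4,3,3,3,3,3,3}`, whose two degree-4 vertices (one in each part) are adjacent and
such that every 4-cycle contains the edge joining the two degree-4 vertices
(namely Cousin 89 of the `E₉+e` family). -/
theorem cousin89_unique
    (G G' : SimpleGraph (Fin 7 ⊕ Fin 7)) [DecidableRel G.Adj] [DecidableRel G'.Adj]
    (hbip : ∀ x y, G.Adj x y → (x.isLeft ∧ y.isRight) ∨ (x.isRight ∧ y.isLeft))
    (hbip' : ∀ x y, G'.Adj x y → (x.isLeft ∧ y.isRight) ∨ (x.isRight ∧ y.isLeft))
    (hA : Multiset.map (fun i : Fin 7 => G.degree (Sum.inl i)) Finset.univ.val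
      = {4, 3, 3, 3, 3, 3, 3})
    (hB : Multiset.map (fun j : Fin 7 => G.degree (Sum.inr j)) Finset.univ.val
      = {4, 3, 3, 3, 3, 3, 3})
    (hA' : Multiset.map (fun i : Fin 7 => G'.degree (Sum.inl i)) Finset.univ.val
      = {4, 3, 3, 3, 3, 3, 3})
    (hB' : Multiset.map (fun j : Fin 7 => G'.degree (Sum.inr j)) Finset.univ.val
      = {4, 3, 3, 3, 3, 3, 3})
    (b b' : Fin 7)
    (hb : G.degree (Sum.inl b) = 4) (hb' : G.degree (Sum.inr b') = 4)
    (hadj : G.Adj (Sum.inl b) (Sum.inr b'))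
    (h4 : ∀ (v : Fin 7 ⊕ Fin 7) (c : G.Walk v v), c.IsCycle → c.length = 4 →
      s(Sum.inl b, Sum.inr b') ∈ c.edges)
    (c c' : Fin 7)
    (hc : G'.degree (Sum.inl c) = 4) (hc' : G'.degree (Sum.inr c') = 4)
    (hadj' : G'.Adj (Sum.inl c) (Sum.inr c'))
    (h4' : ∀ (v : Fin 7 ⊕ Fin 7) (w : G'.Walk v v), w.IsCycle → w.length = 4 →
      s(Sum.inl c, Sum.inr c') ∈ w.edges) :
    Nonempty (G ≃g G') := by
  obtain ⟨f, g, hfg⟩ := exists_equiv_biadj_iff_cousin89Adj hbip hA hB hb hb' hadj h4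
  obtain ⟨f', g', hfg'⟩ := exists_equiv_biadj_iff_cousin89Adj hbip' hA' hB' hc hc' hadj' h4'
  refine ⟨isoOfBiadjIff hbip hbip' (f.symm.trans f') (g.symm.trans g') fun x y => ?_⟩
  simpa using (hfg' (f.symm x) (g.symm y)).trans (hfg (f.symm x) (g.symm y)).symm
end
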